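/- Let H be a connected Hamiltonian subcubic graph with Hamiltonian cycle v1…v_{2p+1} of odd length, and suppose there is a chord v_i v_j with |i−j| > 1 and deg(v_{i−1}) = deg(v_{j−1}) = 2. Then χ'(H) = 3. -/

import Mathlib

/-!
The lower bound comes from `v i`, which has three distinct neighbours `v (i - 1)`, `v (i + 1)`
and `v j`. For the upper bound, give the chord `v i v j` colour 1, the cycle edges
`v (i - 1) v i` and `v (j - 1) v j` colour 2, and alternate colours 0 and 1 along the two arcs
`v i … v (j - 1)` and `v j … v (i - 1)`, starting with 0 at `v i` and at `v j`. Every other chord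
gets colour 2. An endpoint of such a chord is not `v (i - 1)` or `v (j - 1)`, which have degree 2,
nor `v i` or `v j`, which are saturated by the chord `v i v j` and the cycle; so both cycle edges
at it are coloured 0 and 1.
-/

noncomputable def SimpleGraph.chromaticIndex {V : Type*} (H : SimpleGraph V) : ℕ∞ :=
  H.lineGraph.chromaticNumber

/-- The colour of the `t`-th cycle edge after `v i`, when the chord from `v i` ends `a` steps
further along a cycle of length `n`. -/
def arcColor (n a t : ℕ) : Fin 3 :=
  if t = a - 1 ∨ t = n - 1 then 2
  else if t < a then ⟨t % 2, by omega⟩ else ⟨(t - a) % 2, by omega⟩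

section ArcColor

variable {n a t : ℕ}

theorem val_arcColor : (arcColor n a t : ℕ) =
    if t = a - 1 ∨ t = n - 1 then 2 else if t < a then t % 2 else (t - a) % 2 := by
  unfold arcColor
  split_ifs <;> rfl

theorem arcColor_ne_succ_mod (ha : 2 ≤ a) (han : a + 2 ≤ n) (ht : t < n) :
    arcColor n a t ≠ arcColor n a ((t + 1) % n) := by
  rw [Ne, Fin.ext_iff, val_arcColor, val_arcColor]
  rcases Nat.lt_or_ge (t + 1) n with h | h
  · rw [Nat.mod_eq_of_lt h]
    grind
  · rw [show t + 1 = n by omega, Nat.mod_self]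
    grind

theorem arcColor_eq_two_iff : arcColor n a t = 2 ↔ t = a - 1 ∨ t = n - 1 := by
  rw [Fin.ext_iff, val_arcColor, Fin.val_two]
  grind

theorem arcColor_zero (ha : 2 ≤ a) (hn : 2 ≤ n) : arcColor n a 0 = 0 := by
  rw [Fin.ext_iff, val_arcColor, Fin.val_zero]
  grind

theorem arcColor_self (ha : 0 < a) (han : a + 1 < n) : arcColor n a a = 0 := by
  rw [Fin.ext_iff, val_arcColor, Fin.val_zero]
  grind

end ArcColor

theorem ZMod.val_add_one_eq_mod {n : ℕ} [NeZero n] (x : ZMod n) :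
    (x + 1).val = (x.val + 1) % n := by
  rw [ZMod.val_add, ZMod.val_one_eq_one_mod, Nat.add_mod_mod]

section CycleColor

variable {n : ℕ} [NeZero n] {i j : ZMod n}

def cycleColor (i j k : ZMod n) : Fin 3 := arcColor n (j - i).val (k - i).val

variable (hij : i ≠ j) (hij₁ : j ≠ i + 1) (hji₁ : i ≠ j + 1)
include hij hij₁ hji₁

theorem two_le_val_sub : 2 ≤ (j - i).val ∧ (j - i).val + 2 ≤ n := by
  have hval : ∀ m : ℕ, (j - i).val = m → j - i = m := fun m h =>
    h ▸ (ZMod.natCast_zmod_val _).symm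
  have h0 : (j - i).val ≠ 0 := fun h => hij (sub_eq_zero.1 (by simpa using hval 0 h)).symm
  have h1 : (j - i).val ≠ 1 := fun h => hij₁ (by simpa [sub_eq_iff_eq_add'] using hval 1 h)
  have hn1 : (j - i).val ≠ n - 1 := fun h => hji₁ <| by
    have := hval _ h
    rw [Nat.cast_pred (NeZero.pos n), ZMod.natCast_self] at this
    linear_combination -this
  have := ZMod.val_lt (j - i)
  omega

theorem cycleColor_ne_add_one (k : ZMod n) : cycleColor i j k ≠ cycleColor i j (k + 1) := by
  obtain ⟨ha, han⟩ := two_le_val_sub hij hij₁ hji₁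
  unfold cycleColor
  rw [add_sub_right_comm, ZMod.val_add_one_eq_mod]
  exact arcColor_ne_succ_mod ha han (ZMod.val_lt _)

theorem cycleColor_eq_two_iff (k : ZMod n) :
    cycleColor i j k = 2 ↔ k = i - 1 ∨ k = j - 1 := by
  obtain ⟨ha, han⟩ := two_le_val_sub hij hij₁ hji₁
  have ht := ZMod.val_lt (k - i)
  have hval (c : ZMod n) : k + 1 = c ↔ (k + 1 - i).val = (c - i).val := by
    rw [(ZMod.val_injective n).eq_iff, sub_left_inj]
  rw [eq_sub_iff_add_eq, eq_sub_iff_add_eq, hval, hval, sub_self, ZMod.val_zero,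
    add_sub_right_comm, ZMod.val_add_one_eq_mod, cycleColor, arcColor_eq_two_iff]
  rcases Nat.lt_or_ge ((k - i).val + 1) n with h | h
  · rw [Nat.mod_eq_of_lt h]
    omega
  · rw [show (k - i).val + 1 = n by omega, Nat.mod_self]
    omega

theorem cycleColor_left : cycleColor i j i = 0 := by
  obtain ⟨ha, han⟩ := two_le_val_sub hij hij₁ hji₁
  rw [cycleColor, sub_self, ZMod.val_zero]
  exact arcColor_zero ha (by omega)

theorem cycleColor_right : cycleColor i j j = 0 := by
  obtain ⟨ha, han⟩ := two_le_val_sub hij hij₁ hji₁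
  exact arcColor_self (by omega) (by omega)

end CycleColor

namespace SimpleGraph

variable {V α : Type*} {H : SimpleGraph V}

def lineGraphColoringOfLocal (c : V → V → α) (hsymm : ∀ x y, c x y = c y x)
    (hc : ∀ x y z, H.Adj x y → H.Adj x z → y ≠ z → c x y ≠ c x z) : H.lineGraph.Coloring α :=
  Coloring.mk (fun e => Sym2.lift ⟨c, hsymm⟩ e.1) <| by
    rintro e₁ e₂ hadj
    obtain ⟨hne, x, hx₁, hx₂⟩ := lineGraph_adj_iff_exists.1 hadj
    have he₁ := Sym2.other_spec hx₁
    have he₂ := Sym2.other_spec hx₂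
    have hy : H.Adj x (Sym2.Mem.other hx₁) := by rw [← mem_edgeSet, he₁]; exact e₁.2
    have hz : H.Adj x (Sym2.Mem.other hx₂) := by rw [← mem_edgeSet, he₂]; exact e₂.2
    have hyz : Sym2.Mem.other hx₁ ≠ Sym2.Mem.other hx₂ := fun h =>
      hne (Subtype.ext (by rw [← he₁, ← he₂, h]))
    rw [← he₁, ← he₂]
    exact hc x _ _ hy hz hyz

theorem degree_le_chromaticIndex [Fintype V] [DecidableRel H.Adj] (x : V) :
    (H.degree x : ℕ∞) ≤ H.chromaticIndex := by
  refine le_chromaticNumber_of_pairwise_adj (ι := H.neighborSet x)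
    (by rw [Nat.card_eq_fintype_card, card_neighborSet_eq_degree])
    (fun y => ⟨s(x, y), y.2⟩) ?_
  rintro ⟨y, hy⟩ ⟨z, hz⟩ hyz
  refine lineGraph_adj_iff_exists.2 ⟨?_, x, Sym2.mem_mk_left _ _, Sym2.mem_mk_left _ _⟩
  exact fun h => hyz (Subtype.ext (Sym2.congr_right.1 (congrArg Subtype.val h)))

theorem mem_of_adj_of_degree_le_card [Fintype V] [DecidableRel H.Adj] {x w : V}
    {s : Finset V} (hs : s ⊆ H.neighborFinset x) (hdeg : H.degree x ≤ s.card)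
    (hw : H.Adj x w) : w ∈ s := by
  rw [Finset.eq_of_subset_of_card_le hs (by rwa [card_neighborFinset_eq_degree])]
  exact (mem_neighborFinset _ _ _).2 hw

variable {n : ℕ} {v : ZMod n → V}

def IsChord (H : SimpleGraph V) (v : ZMod n → V) (a b : ZMod n) : Prop :=
  H.Adj (v a) (v b) ∧ b ≠ a + 1 ∧ a ≠ b + 1

theorem IsChord.symm {a b : ZMod n} (h : IsChord H v a b) : IsChord H v b a :=
  ⟨h.1.symm, h.2.2, h.2.1⟩

theorem adj_sub_one (hcyc : ∀ k, H.Adj (v k) (v (k + 1))) (m : ZMod n) :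
    H.Adj (v m) (v (m - 1)) := by
  simpa using (hcyc (m - 1)).symm

theorem IsChord.card_neighbors [DecidableEq V] (hv : Function.Injective v)
    (h2 : (2 : ZMod n) ≠ 0) {m a : ZMod n} (hc : IsChord H v m a) :
    ({v (m + 1), v (m - 1), v a} : Finset V).card = 3 := by
  refine Finset.card_eq_three.2 ⟨_, _, _, ?_, ?_, ?_, rfl⟩ <;> rw [Ne, hv.eq_iff]
  · exact fun h => h2 (by linear_combination h)
  · exact fun h => hc.2.1 h.symm
  · exact fun h => hc.2.2 (by linear_combination h)

section Hamiltonian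

variable [Fintype V] [DecidableRel H.Adj]

theorem not_isChord_of_degree_le_two (hv : Function.Injective v)
    (hcyc : ∀ k, H.Adj (v k) (v (k + 1))) (h2 : (2 : ZMod n) ≠ 0) {m b : ZMod n}
    (hdeg : H.degree (v m) ≤ 2) : ¬ IsChord H v m b := by
  classical
  rintro ⟨hb, hb₁, hb₂⟩
  have hs : {v (m + 1), v (m - 1)} ⊆ H.neighborFinset (v m) := by
    simpa [Finset.insert_subset_iff] using ⟨hcyc m, adj_sub_one hcyc m⟩
  have hcard : ({v (m + 1), v (m - 1)} : Finset V).card = 2 :=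
    Finset.card_pair fun h => h2 (by linear_combination hv h)
  have := mem_of_adj_of_degree_le_card hs (hcard ▸ hdeg) hb
  simp only [Finset.mem_insert, Finset.mem_singleton, hv.eq_iff] at this
  rcases this with h | h
  · exact hb₁ h
  · exact hb₂ (by linear_combination -h)

theorem IsChord.neighbors_subset [DecidableEq V] (hcyc : ∀ k, H.Adj (v k) (v (k + 1)))
    {m a : ZMod n} (hc : IsChord H v m a) :
    {v (m + 1), v (m - 1), v a} ⊆ H.neighborFinset (v m) := by
  simpa [Finset.insert_subset_iff] using ⟨hcyc m, adj_sub_one hcyc m, hc.1⟩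

theorem IsChord.three_le_degree (hv : Function.Injective v)
    (hcyc : ∀ k, H.Adj (v k) (v (k + 1))) (h2 : (2 : ZMod n) ≠ 0) {m a : ZMod n}
    (hc : IsChord H v m a) : 3 ≤ H.degree (v m) := by
  classical
  rw [← card_neighborFinset_eq_degree, ← hc.card_neighbors hv h2]
  exact Finset.card_le_card (hc.neighbors_subset hcyc)

theorem IsChord.eq (hv : Function.Injective v) (hcyc : ∀ k, H.Adj (v k) (v (k + 1)))
    (h2 : (2 : ZMod n) ≠ 0) {m a b : ZMod n} (hdeg : H.degree (v m) ≤ 3)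
    (ha : IsChord H v m a) (hb : IsChord H v m b) : a = b := by
  classical
  have := mem_of_adj_of_degree_le_card (ha.neighbors_subset hcyc)
    ((ha.card_neighbors hv h2).symm ▸ hdeg) hb.1
  simp only [Finset.mem_insert, Finset.mem_singleton, hv.eq_iff] at this
  rcases this with h | h | h
  · exact absurd h hb.2.1
  · exact absurd (by linear_combination -h) hb.2.2
  · exact h.symm

end Hamiltonian

/-- Colour the cycle edge `s(v a, v (a + 1))` by `f a` and the chord `s(v a, v b)` by
`g s(a, b)`. -/
def cycleChordColor (f : ZMod n → α) (g : Sym2 (ZMod n) → α) (a b : ZMod n) : α :=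
  if b = a + 1 then f a else if a = b + 1 then f b else g s(a, b)

section CycleChordColor

variable {f : ZMod n → α} {g : Sym2 (ZMod n) → α}

theorem cycleChordColor_add_one (m : ZMod n) : cycleChordColor f g m (m + 1) = f m :=
  if_pos rfl

theorem cycleChordColor_sub_one (h2 : (2 : ZMod n) ≠ 0) (m : ZMod n) :
    cycleChordColor f g m (m - 1) = f (m - 1) := by
  rw [cycleChordColor, if_neg fun h => h2 (by linear_combination -h), if_pos (by ring)]

theorem cycleChordColor_of_isChord {m b : ZMod n} (hc : IsChord H v m b) :
    cycleChordColor f g m b = g s(m, b) := by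
  rw [cycleChordColor, if_neg hc.2.1, if_neg hc.2.2]

theorem cycleChordColor_comm (h2 : (2 : ZMod n) ≠ 0) (a b : ZMod n) :
    cycleChordColor f g a b = cycleChordColor f g b a := by
  unfold cycleChordColor
  by_cases hb : b = a + 1
  · rw [if_pos hb, if_neg fun ha => h2 (by linear_combination -ha - hb), if_pos hb]
  by_cases ha : a = b + 1
  · rw [if_neg hb, if_pos ha, if_pos ha]
  rw [if_neg hb, if_neg ha, if_neg ha, if_neg hb, Sym2.eq_swap]

theorem cycleChordColor_ne [Fintype V] [DecidableRel H.Adj] (hv : Function.Injective v)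
    (hcyc : ∀ k, H.Adj (v k) (v (k + 1))) (h2 : (2 : ZMod n) ≠ 0) (hf : ∀ k, f k ≠ f (k + 1))
    (hg : ∀ m b, IsChord H v m b → g s(m, b) ≠ f m ∧ g s(m, b) ≠ f (m - 1))
    {m a b : ZMod n} (hdeg : H.degree (v m) ≤ 3)
    (ha : H.Adj (v m) (v a)) (hb : H.Adj (v m) (v b)) (hab : a ≠ b) :
    cycleChordColor f g m a ≠ cycleChordColor f g m b := by
  have classify (c : ZMod n) (hc : H.Adj (v m) (v c)) :
      c = m + 1 ∨ c = m - 1 ∨ IsChord H v m c := by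
    by_cases h₁ : c = m + 1
    · exact .inl h₁
    by_cases h₂ : m = c + 1
    · exact .inr (.inl (by linear_combination -h₂))
    · exact .inr (.inr ⟨hc, h₁, h₂⟩)
  have hf' : f (m - 1) ≠ f m := by simpa using hf (m - 1)
  rcases classify a ha with rfl | rfl | hca <;> rcases classify b hb with rfl | rfl | hcb
  · exact absurd rfl hab
  · rw [cycleChordColor_add_one, cycleChordColor_sub_one h2]; exact hf'.symm
  · rw [cycleChordColor_add_one, cycleChordColor_of_isChord hcb]; exact (hg m b hcb).1.symm
  · rw [cycleChordColor_add_one, cycleChordColor_sub_one h2]; exact hf'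
  · exact absurd rfl hab
  · rw [cycleChordColor_sub_one h2, cycleChordColor_of_isChord hcb]; exact (hg m b hcb).2.symm
  · rw [cycleChordColor_add_one, cycleChordColor_of_isChord hca]; exact (hg m a hca).1
  · rw [cycleChordColor_sub_one h2, cycleChordColor_of_isChord hca]; exact (hg m a hca).2
  · exact absurd (hca.eq hv hcyc h2 hdeg hcb) hab

theorem nonempty_lineGraph_coloring_of_cycle [Fintype V] [DecidableRel H.Adj]
    (hv : Function.Bijective v) (hcyc : ∀ k, H.Adj (v k) (v (k + 1))) (h2 : (2 : ZMod n) ≠ 0)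
    (hdeg : ∀ x, H.degree x ≤ 3) (hf : ∀ k, f k ≠ f (k + 1))
    (hg : ∀ m b, IsChord H v m b → g s(m, b) ≠ f m ∧ g s(m, b) ≠ f (m - 1)) :
    Nonempty (H.lineGraph.Coloring α) := by
  let e := Equiv.ofBijective v hv
  refine ⟨lineGraphColoringOfLocal (fun x y => cycleChordColor f g (e.symm x) (e.symm y))
    (fun x y => cycleChordColor_comm h2 _ _) ?_⟩
  intro x y z hxy hxz hyz
  obtain ⟨m, rfl⟩ := e.surjective x
  obtain ⟨a, rfl⟩ := e.surjective y
  obtain ⟨b, rfl⟩ := e.surjective z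
  simp only [Equiv.symm_apply_apply]
  exact cycleChordColor_ne hv.1 hcyc h2 hf hg (hdeg _) hxy hxz fun h => hyz (by rw [h])

end CycleChordColor

theorem lineGraph_colorable_three_of_chord [Fintype V] [DecidableRel H.Adj]
    (hv : Function.Bijective v) (hcyc : ∀ k, H.Adj (v k) (v (k + 1))) (h2 : (2 : ZMod n) ≠ 0)
    (hdeg : ∀ x, H.degree x ≤ 3) {i j : ZMod n} (hij : IsChord H v i j)
    (hi : H.degree (v (i - 1)) ≤ 2) (hj : H.degree (v (j - 1)) ≤ 2)
    {f : ZMod n → Fin 3} (hf : ∀ k, f k ≠ f (k + 1))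
    (hf₂ : ∀ k, f k = 2 ↔ k = i - 1 ∨ k = j - 1) (hfi : f i = 0) (hfj : f j = 0) :
    H.lineGraph.Colorable 3 := by
  refine nonempty_lineGraph_coloring_of_cycle (g := fun e => if e = s(i, j) then 1 else 2)
    hv hcyc h2 hdeg hf fun m b hmb => ?_
  have hdeg₂ {k} (hk : k = i - 1 ∨ k = j - 1) : H.degree (v k) ≤ 2 := by
    rcases hk with rfl | rfl <;> assumption
  by_cases he : s(m, b) = s(i, j)
  · rw [if_pos he]
    rcases (Sym2.eq_iff.1 he).imp And.left And.left with rfl | rfl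
    · simp [hfi, (hf₂ _).2 (.inl rfl)]
    · simp [hfj, (hf₂ _).2 (.inr rfl)]
  · rw [if_neg he]
    refine ⟨fun h => not_isChord_of_degree_le_two hv.1 hcyc h2 (hdeg₂ ((hf₂ m).1 h.symm)) hmb,
      fun h => he ?_⟩
    rcases (hf₂ _).1 h.symm with hm | hm <;> obtain rfl := sub_left_injective hm
    · rw [hmb.eq hv.1 hcyc h2 (hdeg _) hij]
    · rw [hmb.eq hv.1 hcyc h2 (hdeg _) hij.symm, Sym2.eq_swap]

end SimpleGraph

theorem stmt12_general {V : Type*} [Fintype V] (H : SimpleGraph V)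
    [DecidableRel H.Adj] (p : ℕ) (hp : 1 ≤ p)
    (hmax : ∀ w, H.degree w ≤ 3)
    (v : ZMod (2 * p + 1) → V) (hbij : Function.Bijective v)
    (hcyc : ∀ i, H.Adj (v i) (v (i + 1)))
    (i j : ZMod (2 * p + 1)) (hchord : H.Adj (v i) (v j))
    (hne : i ≠ j) (hne1 : j ≠ i + 1) (hne2 : i ≠ j + 1)
    (h1 : H.degree (v (i - 1)) = 2) (h2 : H.degree (v (j - 1)) = 2) :
    H.chromaticIndex = 3 := by
  have htwo : (2 : ZMod (2 * p + 1)) ≠ 0 := by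
    exact_mod_cast (ZMod.natCast_eq_zero_iff 2 (2 * p + 1)).not.2 fun h => by
      have := Nat.le_of_dvd two_pos h; omega
  have hij : H.IsChord v i j := ⟨hchord, hne1, hne2⟩
  refine le_antisymm ?_ ?_
  · exact (SimpleGraph.lineGraph_colorable_three_of_chord hbij hcyc htwo hmax hij h1.le h2.le
      (cycleColor_ne_add_one hne hne1 hne2) (cycleColor_eq_two_iff hne hne1 hne2)
      (cycleColor_left hne hne1 hne2) (cycleColor_right hne hne1 hne2)).chromaticNumber_le
  · calc (3 : ℕ∞) ≤ H.degree (v i) := by exact_mod_cast hij.three_le_degree hbij.1 hcyc htwo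
      _ ≤ H.chromaticIndex := H.degree_le_chromaticIndex _

/-- Lemma 1, cases 1 and 2: a connected Hamiltonian subcubic graph on an odd number of
vertices with a chord `v_i v_j` such that `v_{i-1}` and `v_{j-1}` have degree 2 has
chromatic index 3. -/
theorem stmt12 {V : Type*} [Fintype V] [DecidableEq V] (H : SimpleGraph V)
    [DecidableRel H.Adj] (p : ℕ) (hp : 1 ≤ p)
    (hconn : H.Connected) (hmax : ∀ w, H.degree w ≤ 3)
    (v : ZMod (2 * p + 1) → V) (hbij : Function.Bijective v)
    (hcyc : ∀ i, H.Adj (v i) (v (i + 1)))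
    (i j : ZMod (2 * p + 1)) (hchord : H.Adj (v i) (v j))
    (hne : i ≠ j) (hne1 : j ≠ i + 1) (hne2 : i ≠ j + 1)
    (h1 : H.degree (v (i - 1)) = 2) (h2 : H.degree (v (j - 1)) = 2) :
    H.chromaticIndex = 3 :=
  stmt12_general H p hp hmax v hbij hcyc i j hchord hne hne1 hne2 h1 h2
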